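/- Let G be a finite simple graph whose vertex set is partitioned into sets A and B, and let c be a positive real such that ŝ(G[A]) ≤ c·|A| and ŝ(G[B]) ≤ c·|B|. Then the sum-color cost satisfies ŝ(G) ≤ 2c·|V(G)|. -/

import Mathlib

/-!
Painter can guarantee `ŝ(G[S ∪ T]) ≤ 2 ŝ(G[S]) + 2 ŝ(G[T])` for disjoint `S` and `T`: when Lister
marks `M`, one side, say `S`, contains at least half of `M`, and Painter colors the set that is
optimal against Lister marking `M ∩ S` in the game on `G[S]`. Lister's score `|M| ≤ 2 |M ∩ S|` is
then paid for by twice the drop of `ŝ(G[S])`, and induction on `|S| + |T|` handles the rest.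
-/

open Finset

/-- Auxiliary fuelled recursion for the slow-coloring game value.
`slowAux G n S` computes the value of the slow-coloring game on the
subgraph of `G` induced by the set `S` of (uncolored) vertices, provided
`n ≥ S.card`. -/
noncomputable def slowAux {V : Type*} [DecidableEq V] (G : SimpleGraph V) :
    ℕ → Finset V → ℕ
  | 0, _ => 0
  | n + 1, S =>
      (S.powerset.filter fun M => M.Nonempty).sup fun M =>
        M.card + sInf {k : ℕ | ∃ X : Finset V, X ⊆ M ∧ X.Nonempty ∧
          (∀ x ∈ X, ∀ y ∈ X, ¬ G.Adj x y) ∧ k = slowAux G n (S \ X)}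

/-- The sum-color cost `ŝ(G[S])` of the subgraph of `G` induced by the
vertex set `S`. -/
noncomputable def slowCost {V : Type*} [DecidableEq V] (G : SimpleGraph V)
    (S : Finset V) : ℕ :=
  slowAux G S.card S

section

variable {V : Type*} {G : SimpleGraph V}

def IsPainterMove (G : SimpleGraph V) (M X : Finset V) : Prop :=
  X ⊆ M ∧ X.Nonempty ∧ ∀ x ∈ X, ∀ y ∈ X, ¬ G.Adj x y

lemma IsPainterMove.singleton {M : Finset V} {x : V} (hx : x ∈ M) : IsPainterMove G M {x} :=
  ⟨singleton_subset_iff.2 hx, singleton_nonempty x, by simp⟩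

variable [DecidableEq V]

lemma slowAux_empty (n : ℕ) : slowAux G n (∅ : Finset V) = 0 := by
  cases n <;> simp [slowAux]

@[simp]
lemma slowCost_empty : slowCost G (∅ : Finset V) = 0 :=
  slowAux_empty 0

lemma slowAux_congr_fuel {n m : ℕ} {S : Finset V} (hn : S.card ≤ n) (hm : S.card ≤ m) :
    slowAux G n S = slowAux G m S := by
  induction n generalizing m S with
  | zero => rw [card_eq_zero.1 (Nat.le_zero.1 hn), slowAux_empty, slowAux_empty]
  | succ n ih =>
    rcases S.eq_empty_or_nonempty with rfl | hS
    · rw [slowAux_empty, slowAux_empty]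
    obtain ⟨m, rfl⟩ : ∃ m', m = m' + 1 := Nat.exists_eq_add_one.2 (hS.card_pos.trans_le hm)
    simp only [slowAux]
    refine sup_congr rfl fun M hM => ?_
    rw [mem_filter, mem_powerset] at hM
    congr 2
    ext k
    refine exists_congr fun X => and_congr_right fun hXM => and_congr_right fun hX => ?_
    have := card_lt_card (sdiff_ssubset (hXM.trans hM.1) hX)
    rw [ih (m := m) (by omega) (by omega)]

lemma slowAux_eq_slowCost {n : ℕ} {S : Finset V} (h : S.card ≤ n) :
    slowAux G n S = slowCost G S :=
  slowAux_congr_fuel h le_rfl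

lemma slowCost_eq_sup {S : Finset V} (hS : S.Nonempty) :
    slowCost G S = (S.powerset.filter fun M => M.Nonempty).sup fun M =>
      M.card + sInf {k | ∃ X, IsPainterMove G M X ∧ k = slowCost G (S \ X)} := by
  obtain ⟨n, hn⟩ := Nat.exists_eq_add_one.2 hS.card_pos
  rw [slowCost, hn, slowAux]
  refine sup_congr rfl fun M hM => ?_
  rw [mem_filter, mem_powerset] at hM
  congr 2
  ext k
  simp only [IsPainterMove, Set.mem_ofPred_eq, and_assoc]
  refine exists_congr fun X => and_congr_right fun hXM => and_congr_right fun hX => ?_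
  have := card_lt_card (sdiff_ssubset (hXM.trans hM.1) hX)
  rw [slowAux_eq_slowCost (by omega)]

lemma exists_painterMove_card_add_slowCost_le {S M : Finset V} (hMS : M ⊆ S)
    (hM : M.Nonempty) :
    ∃ X, IsPainterMove G M X ∧ M.card + slowCost G (S \ X) ≤ slowCost G S := by
  obtain ⟨x, hx⟩ := hM
  have hne : {k | ∃ X, IsPainterMove G M X ∧ k = slowCost G (S \ X)}.Nonempty :=
    ⟨_, {x}, IsPainterMove.singleton hx, rfl⟩
  obtain ⟨X, hX, hXk⟩ := Nat.sInf_mem hne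
  refine ⟨X, hX, ?_⟩
  rw [← hXk, slowCost_eq_sup ⟨x, hMS hx⟩]
  exact le_sup (f := fun M => M.card + sInf {k | ∃ X, IsPainterMove G M X ∧
    k = slowCost G (S \ X)}) (mem_filter.2 ⟨mem_powerset.2 hMS, x, hx⟩)

lemma slowCost_le_of_forall_exists_painterMove {S : Finset V} {k : ℕ}
    (h : ∀ M ⊆ S, M.Nonempty → ∃ X, IsPainterMove G M X ∧ M.card + slowCost G (S \ X) ≤ k) :
    slowCost G S ≤ k := by
  rcases S.eq_empty_or_nonempty with rfl | hS
  · simp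
  rw [slowCost_eq_sup hS]
  refine Finset.sup_le fun M hM => ?_
  rw [mem_filter, mem_powerset] at hM
  obtain ⟨X, hX, hXk⟩ := h M hM.1 hM.2
  have := Nat.sInf_le (s := {k | ∃ X, IsPainterMove G M X ∧ k = slowCost G (S \ X)}) ⟨X, hX, rfl⟩
  omega

lemma exists_painterMove_of_card_le_two_mul_card_inter {S T M : Finset V}
    (hST : Disjoint S T) (hM : M.Nonempty) (hMS : M.card ≤ 2 * (M ∩ S).card)
    (ih : ∀ X ⊆ S, X.Nonempty →
      slowCost G (S \ X ∪ T) ≤ 2 * slowCost G (S \ X) + 2 * slowCost G T) :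
    ∃ X, IsPainterMove G M X ∧
      M.card + slowCost G ((S ∪ T) \ X) ≤ 2 * slowCost G S + 2 * slowCost G T := by
  have hMS_ne : (M ∩ S).Nonempty := card_pos.1 (by have := hM.card_pos; omega)
  obtain ⟨X, ⟨hXM, hX, hXind⟩, hXcost⟩ :=
    exists_painterMove_card_add_slowCost_le (G := G) inter_subset_right hMS_ne
  have hXS : X ⊆ S := hXM.trans inter_subset_right
  have hsdiff : (S ∪ T) \ X = S \ X ∪ T := by
    rw [union_sdiff_distrib, sdiff_eq_self_of_disjoint (hST.mono_left hXS).symm]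
  refine ⟨X, ⟨hXM.trans inter_subset_left, hX, hXind⟩, ?_⟩
  rw [hsdiff]
  have := ih X hXS hX
  omega

theorem slowCost_union_le {S T : Finset V} (hST : Disjoint S T) :
    slowCost G (S ∪ T) ≤ 2 * slowCost G S + 2 * slowCost G T := by
  induction h : S.card + T.card using Nat.strong_induction_on generalizing S T with
  | _ n ih =>
  refine slowCost_le_of_forall_exists_painterMove fun M hM hMne => ?_
  have hMcard : M.card ≤ (M ∩ S).card + (M ∩ T).card := by
    rw [← card_union_of_disjoint (hST.mono inter_subset_right inter_subset_right),
      ← inter_union_distrib_left, inter_eq_left.2 hM]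
  rcases le_or_gt M.card (2 * (M ∩ S).card) with hMS | hMT
  · refine exists_painterMove_of_card_le_two_mul_card_inter hST hMne hMS fun X hXS hX => ?_
    have := card_lt_card (sdiff_ssubset hXS hX)
    exact ih _ (by omega) (hST.mono_left sdiff_subset) rfl
  · rw [union_comm, add_comm (2 * slowCost G S)]
    refine exists_painterMove_of_card_le_two_mul_card_inter hST.symm hMne (by omega)
      fun X hXT hX => ?_
    have := card_lt_card (sdiff_ssubset hXT hX)
    rw [union_comm, add_comm]
    exact ih _ (by omega) (hST.mono_right sdiff_subset) rfl

end

theorem stmt_11_general {V : Type*} [Fintype V] [DecidableEq V] (G : SimpleGraph V)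
    (A B : Finset V) (hdisj : Disjoint A B) (hcover : ∀ v : V, v ∈ A ∨ v ∈ B)
    (c : ℝ)
    (hA : (slowCost G A : ℝ) ≤ c * A.card)
    (hB : (slowCost G B : ℝ) ≤ c * B.card) :
    (slowCost G Finset.univ : ℝ) ≤ 2 * c * Fintype.card V := by
  have hunion : A ∪ B = univ := eq_univ_of_forall fun v => mem_union.2 (hcover v)
  have hcard : (A.card : ℝ) + B.card = Fintype.card V := by
    rw [← card_univ, ← hunion, card_union_of_disjoint hdisj, Nat.cast_add]
  have hsplit : (slowCost G univ : ℝ) ≤ 2 * slowCost G A + 2 * slowCost G B := by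
    rw [← hunion]
    exact_mod_cast slowCost_union_le hdisj
  calc (slowCost G univ : ℝ) ≤ 2 * (c * A.card) + 2 * (c * B.card) := by linarith
    _ = 2 * c * Fintype.card V := by rw [← hcard]; ring

theorem stmt_11 {V : Type*} [Fintype V] [DecidableEq V] (G : SimpleGraph V)
    (A B : Finset V) (hdisj : Disjoint A B) (hcover : ∀ v : V, v ∈ A ∨ v ∈ B)
    (c : ℝ) (hc : 0 < c)
    (hA : (slowCost G A : ℝ) ≤ c * A.card)
    (hB : (slowCost G B : ℝ) ≤ c * B.card) :
    (slowCost G Finset.univ : ℝ) ≤ 2 * c * Fintype.card V :=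
  stmt_11_general G A B hdisj hcover c hA hB
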